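/- Let L be a set of monomials of k[x_1,...,x_n] of degree at most d-1, let B_{d-1} be the monomials of degree d-1 not in <L>, let r be the largest element of B_{d-1} in graded reverse lexicographic order, and let x_t be the smallest variable dividing r. Then the set B_d of degree-d monomials not in <L> equals { m ∈ {x_i·b : t ≤ i ≤ n, b ∈ B_{d-1}} : m ∉ <L> }. -/
import Mathlib


/-- Total degree of a monomial (exponent vector). -/
def mdeg {n : ℕ} (a : Fin n →₀ ℕ) : ℕ := a.sum fun _ e => e

/-- Graded reverse lexicographic order (with `x_1 > x_2 > ... > x_n`):
`a < b` iff `deg a < deg b`, or the degrees agree and at the largest index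
where they differ, `a` has the larger exponent. -/
def grevlexLt {n : ℕ} (a b : Fin n →₀ ℕ) : Prop :=
  mdeg a < mdeg b ∨ (mdeg a = mdeg b ∧ ∃ i : Fin n, b i < a i ∧ ∀ j, i < j → a j = b j)

lemma mdeg_add {n : ℕ} (a b : Fin n →₀ ℕ) : mdeg (a + b) = mdeg a + mdeg b := by
  unfold mdeg
  exact Finsupp.sum_add_index' (fun _ => rfl) (fun _ _ _ => rfl)

lemma mdeg_single {n : ℕ} (i : Fin n) (k : ℕ) : mdeg (Finsupp.single i k) = k :=
  Finsupp.sum_single_index rfl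

/-- tier 2: let `r` be the grevlex-largest monomial of `B_{d-1}` and `x_t` the smallest
variable dividing `r` (with `x_1 > ... > x_n`, i.e. `t` is the largest index with
`r t ≠ 0`).  Then `B_d = { m ∈ {x_i * b : t ≤ i, b ∈ B_{d-1}} : m ∉ <L> }`. -/
theorem Bd_eq_tier2 {n : ℕ} (L : Set (Fin n →₀ ℕ)) (d : ℕ) (hd : 1 ≤ d)
    (hL : ∀ l ∈ L, mdeg l ≤ d - 1)
    (r : Fin n →₀ ℕ)
    (hrB : mdeg r = d - 1 ∧ ¬ ∃ l ∈ L, l ≤ r)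
    (hrmax : ∀ b : Fin n →₀ ℕ, (mdeg b = d - 1 ∧ ¬ ∃ l ∈ L, l ≤ b) → b ≠ r → grevlexLt b r)
    (t : Fin n) (ht : r t ≠ 0) (ht' : ∀ j : Fin n, t < j → r j = 0) :
    {a : Fin n →₀ ℕ | mdeg a = d ∧ ¬ ∃ l ∈ L, l ≤ a} =
      {a : Fin n →₀ ℕ |
        (∃ i : Fin n, t ≤ i ∧ ∃ b : Fin n →₀ ℕ,
          (mdeg b = d - 1 ∧ ¬ ∃ l ∈ L, l ≤ b) ∧ a = Finsupp.single i 1 + b) ∧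
        ¬ ∃ l ∈ L, l ≤ a} := by
  ext a
  simp only [Set.mem_setOf_eq]
  constructor
  · rintro ⟨hdeg, hnot⟩
    refine ⟨?_, hnot⟩
    have hne : a.support.Nonempty := by
      rw [Finsupp.support_nonempty_iff]
      intro h0
      rw [h0] at hdeg
      simp [mdeg] at hdeg
      omega
    set q := a.support.max' hne with hq
    have hqmem : q ∈ a.support := a.support.max'_mem hne
    have haq : a q ≠ 0 := Finsupp.mem_support_iff.mp hqmem
    have hqmax : ∀ j, q < j → a j = 0 := by
      intro j hj
      by_contra h
      exact absurd (a.support.le_max' j (Finsupp.mem_support_iff.mpr h)) (not_le.mpr hj)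
    have hsle : Finsupp.single q 1 ≤ a :=
      Finsupp.single_le_iff.mpr (Nat.one_le_iff_ne_zero.mpr haq)
    set b := a - Finsupp.single q 1 with hb
    have hab : a = Finsupp.single q 1 + b := by
      rw [hb, add_comm, tsub_add_cancel_of_le hsle]
    have hbdeg : mdeg b = d - 1 := by
      have h2 := hdeg
      rw [hab, mdeg_add, mdeg_single] at h2
      omega
    have hble : b ≤ a := tsub_le_self
    have hbnot : ¬ ∃ l ∈ L, l ≤ b := by
      rintro ⟨l, hl, hlb⟩
      exact hnot ⟨l, hl, hlb.trans hble⟩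
    by_cases htq : t ≤ q
    · exact ⟨q, htq, b, ⟨hbdeg, hbnot⟩, hab⟩
    · exfalso
      push_neg at htq
      have hblea : ∀ j, b j ≤ a j := fun j => hble j
      have hbt : b t = 0 := by
        have h1 : a t = 0 := hqmax t htq
        have h2 := hblea t
        omega
      have hbr : b ≠ r := by
        intro h
        rw [← h] at ht
        exact ht hbt
      rcases hrmax b ⟨hbdeg, hbnot⟩ hbr with h | ⟨_, i, hi, hij⟩
      · rw [hbdeg, hrB.1] at h; omega
      · have hai : a i ≠ 0 := by have := hblea i; omega
        have hiq : i ≤ q := a.support.le_max' i (Finsupp.mem_support_iff.mpr hai)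
        have hit : i < t := lt_of_le_of_lt hiq htq
        have := hij t hit
        rw [hbt] at this
        exact ht this.symm
  · rintro ⟨⟨i, hti, b, ⟨hbdeg, hbnot⟩, hab⟩, hnot⟩
    refine ⟨?_, hnot⟩
    rw [hab, mdeg_add, mdeg_single, hbdeg]
    omega
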